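/- arXiv:2107.01708 — 7 statements merged into one kernel-verified Lean document; each statement's English description precedes it below -/
import Mathlib

section
/- Let φ be a continuous flow on a compact metric space M and let e : M → [0,∞) be a continuous function vanishing exactly on the set of fixed points of φ. Then for every T > 0 there exists a function r : M → [0,∞), continuous and vanishing exactly on the fixed points, such that whenever d(x,y) ≤ r(x) one has d(φ_t(x), φ_t(y)) ≤ e(φ_t(x)) for all t ∈ [−T, T]. -/
open Metric Filter Topology Set

/-- Rescaled continuity of the flow: given e ∈ C_φ(M) and T > 0, there exists
r ∈ C_φ(M) such that d(x,y) ≤ r(x) implies d(φ_t x, φ_t y) ≤ e(φ_t x) for all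
t ∈ [-T, T]. -/
theorem rescaled_flow_continuity {M : Type*} [MetricSpace M] [CompactSpace M]
    (φ : ℝ → M → M) (hφ : Continuous fun p : ℝ × M => φ p.1 p.2)
    (h0 : ∀ x, φ 0 x = x) (hadd : ∀ t s x, φ (t + s) x = φ t (φ s x))
    (e : M → ℝ) (hec : Continuous e) (henn : ∀ x, 0 ≤ e x)
    (hez : ∀ x, e x = 0 ↔ ∀ t : ℝ, φ t x = x) :
    ∀ T : ℝ, 0 < T → ∃ r : M → ℝ, Continuous r ∧ (∀ x, 0 ≤ r x) ∧
      (∀ x, r x = 0 ↔ ∀ t : ℝ, φ t x = x) ∧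
      ∀ x y : M, dist x y ≤ r x →
        ∀ t ∈ Set.Icc (-T) T, dist (φ t x) (φ t y) ≤ e (φ t x) := by
  intro T hT
  -- if e vanishes somewhere on the orbit of x, then x is fixed
  have hfix : ∀ (x : M) (t : ℝ), e (φ t x) = 0 → ∀ s : ℝ, φ s x = x := by
    intro x t het s
    have hfx : ∀ u, φ u (φ t x) = φ t x := (hez _).1 het
    have hx : φ t x = x := by
      have h1 := hfx (-t)
      have h2 : φ (-t + t) x = φ (-t) (φ t x) := hadd (-t) t x
      rw [h1] at h2
      simpa [h0] using h2.symm
    have := hfx s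
    rw [hx] at this
    exact this
  -- the bad set
  set S : Set (M × M) :=
    {p | ∃ t ∈ Set.Icc (-T) T, e (φ t p.1) ≤ dist (φ t p.1) (φ t p.2)} with hSdef
  have h0mem : (0 : ℝ) ∈ Set.Icc (-T) T := ⟨by linarith, le_of_lt hT⟩
  -- diagonal membership characterizes fixed points
  have hdiag : ∀ x : M, ((x, x) ∈ S ↔ ∀ t : ℝ, φ t x = x) := by
    intro x
    constructor
    · rintro ⟨t, _, ht⟩
      have : e (φ t x) = 0 := le_antisymm (by simpa using ht) (henn _)
      exact hfix x t this
    · intro hx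
      refine ⟨0, h0mem, ?_⟩
      have : e x = 0 := (hez x).2 hx
      simp [h0, this]
  -- S is compact, hence closed
  have hSclosed : IsClosed S := by
    set C : Set (ℝ × M × M) :=
      {q | q.1 ∈ Set.Icc (-T) T ∧
        e (φ q.1 q.2.1) ≤ dist (φ q.1 q.2.1) (φ q.1 q.2.2)} with hCdef
    have hc1 : Continuous fun q : ℝ × M × M => φ q.1 q.2.1 :=
      hφ.comp (continuous_fst.prodMk (continuous_fst.comp continuous_snd))
    have hc2 : Continuous fun q : ℝ × M × M => φ q.1 q.2.2 :=
      hφ.comp (continuous_fst.prodMk (continuous_snd.comp continuous_snd))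
    have hCclosed : IsClosed C := by
      refine IsClosed.inter (isClosed_Icc.preimage continuous_fst) ?_
      exact isClosed_le (hec.comp hc1) (hc1.dist hc2)
    have hCcompact : IsCompact C := by
      refine IsCompact.of_isClosed_subset
        ((isCompact_Icc (a := -T) (b := T)).prod isCompact_univ) hCclosed ?_
      intro q hq
      exact ⟨hq.1, Set.mem_univ _⟩
    have himg : S = Prod.snd '' C := by
      ext p
      constructor
      · rintro ⟨t, ht, hle⟩
        exact ⟨(t, p), ⟨ht, hle⟩, rfl⟩
      · rintro ⟨⟨t, q⟩, ⟨ht, hle⟩, rfl⟩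
        exact ⟨t, ht, hle⟩
    rw [himg]
    exact (hCcompact.image continuous_snd).isClosed
  -- key: points outside S satisfy the estimate
  have hout : ∀ x y : M, (x, y) ∉ S →
      ∀ t ∈ Set.Icc (-T) T, dist (φ t x) (φ t y) ≤ e (φ t x) := by
    intro x y hxy t ht
    by_contra h
    exact hxy ⟨t, ht, le_of_lt (not_le.mp h)⟩
  rcases S.eq_empty_or_nonempty with hS | hS
  · -- no bad pairs at all; in particular no fixed points
    refine ⟨fun _ => 1, continuous_const, fun _ => zero_le_one, ?_, ?_⟩
    · intro x
      constructor
      · intro h; exact absurd h one_ne_zero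
      · intro hx
        exact absurd ((hdiag x).2 hx) (by simp [hS])
    · intro x y _ t ht
      refine hout x y ?_ t ht
      simp [hS]
  · refine ⟨fun x => Metric.infDist (x, x) S / 2, ?_, ?_, ?_, ?_⟩
    · exact (Metric.continuous_infDist_pt S).comp
        (continuous_id.prodMk continuous_id) |>.div_const 2
    · exact fun x => div_nonneg Metric.infDist_nonneg (by norm_num)
    · intro x
      rw [div_eq_zero_iff]
      have hiff : Metric.infDist (x, x) S = 0 ↔ (x, x) ∈ S :=
        (hSclosed.mem_iff_infDist_zero hS).symm
      constructor
      · rintro (h | h)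
        · exact (hdiag x).1 (hiff.1 h)
        · exact absurd h two_ne_zero
      · intro hx
        exact Or.inl (hiff.2 ((hdiag x).2 hx))
    · intro x y hxy t ht
      by_cases hyx : y = x
      · subst hyx
        simp [henn]
      · refine hout x y ?_ t ht
        intro hmem
        have h1 : Metric.infDist (x, x) S ≤ dist (x, x) (x, y) :=
          Metric.infDist_le_dist_of_mem hmem
        have h2 : dist ((x : M), (x : M)) (x, y) = dist x y := by
          simp [Prod.dist_eq, max_eq_right dist_nonneg]
        rw [h2] at h1
        have hxy' : dist x y ≤ Metric.infDist (x, x) S / 2 := hxy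
        have h3 : Metric.infDist (x, x) S ≤ 0 := by linarith
        have h4 : Metric.infDist (x, x) S = 0 :=
          le_antisymm h3 Metric.infDist_nonneg
        have : dist x y ≤ 0 := by linarith
        exact hyx (dist_le_zero.mp (by rwa [dist_comm] at this))
end

section
/- Let f : X → X be an expansive homeomorphism of a compact metric space X with expansiveness constant δ. Define the local stable set W^s_ε(x) = { y : d(fⁿ(x), fⁿ(y)) ≤ ε for all n ≥ 0 }. Then for every 0 < γ < δ there exists N ∈ ℕ such that fⁿ(W^s_δ(x)) ⊆ W^s_γ(fⁿ(x)) for all n ≥ N and all x ∈ X. -/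
open Metric Filter Topology Set

/-- Local stable set of an invertible map. -/
def Ws {X : Type*} [MetricSpace X] (f : Equiv.Perm X) (ε : ℝ) (x : X) : Set X :=
  {y | ∀ n : ℕ, dist ((f ^ n) x) ((f ^ n) y) ≤ ε}

/-!
The pairs `(u, v)` with `γ ≤ d(u, v)` whose orbits stay `δ`-close from time `-N` on form closed
sets decreasing in `N`. By expansiveness their intersection is empty, so by compactness one of
them is already empty. If `y ∈ W^s_δ(x)` and `m ≥ N`, the pair `(fᵐ x, fᵐ y)` is `δ`-close from
time `-N` on, hence `γ`-close.
-/

namespace Equiv.Perm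

variable {X : Type*}

theorem continuous_zpow [TopologicalSpace X] {f : Perm X} (hf : Continuous f)
    (hf' : Continuous f.symm) : ∀ j : ℤ, Continuous ⇑(f ^ j)
  | .ofNat n => by simpa only [Int.ofNat_eq_natCast, zpow_natCast, coe_pow] using hf.iterate n
  | .negSucc n => by
    simpa only [zpow_negSucc, ← inv_pow, coe_pow, inv_def] using hf'.iterate (n + 1)

theorem zpow_apply_pow_apply (f : Perm X) (j : ℤ) (m : ℕ) (x : X) :
    (f ^ j) ((f ^ m) x) = (f ^ (j + m)) x := by
  rw [zpow_add, mul_apply, zpow_natCast]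

end Equiv.Perm

section Expansive

variable {X : Type*} [MetricSpace X] {f : Equiv.Perm X} {δ : ℝ}

theorem dist_zpow_le_of_mem_Ws {ε : ℝ} {x y : X} (hy : y ∈ Ws f ε x) {j : ℤ} (hj : 0 ≤ j) :
    dist ((f ^ j) x) ((f ^ j) y) ≤ ε := by
  lift j to ℕ using hj
  simpa only [zpow_natCast] using hy j

theorem exists_dist_lt_of_forall_dist_zpow_le [CompactSpace X]
    (hcont : ∀ j : ℤ, Continuous ⇑(f ^ j))
    (hexp : ∀ x y : X, (∀ n : ℤ, dist ((f ^ n) x) ((f ^ n) y) ≤ δ) → x = y)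
    {γ : ℝ} (hγ : 0 < γ) :
    ∃ N : ℕ, ∀ u v : X, (∀ j : ℤ, -N ≤ j → dist ((f ^ j) u) ((f ^ j) v) ≤ δ) →
      dist u v < γ := by
  set t : ℕ → Set (X × X) := fun N =>
    {p | γ ≤ dist p.1 p.2} ∩ ⋂ j ∈ Ici (-(N : ℤ)), {p | dist ((f ^ j) p.1) ((f ^ j) p.2) ≤ δ}
  have ht_closed : ∀ N, IsClosed (t N) := fun N =>
    (isClosed_le continuous_const continuous_dist).inter <| isClosed_biInter fun j _ =>
      isClosed_le (((hcont j).comp continuous_fst).dist ((hcont j).comp continuous_snd))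
        continuous_const
  have ht_anti : Antitone t := fun M N hMN p hp =>
    ⟨hp.1, mem_iInter₂.2 fun j hj =>
      mem_iInter₂.1 hp.2 j (by simp only [mem_Ici] at hj ⊢; omega)⟩
  have ht_empty : (univ ∩ ⋂ N, t N) = ∅ := by
    refine eq_empty_of_forall_notMem fun ⟨u, v⟩ ⟨_, hp⟩ => ?_
    have huv : u = v := hexp u v fun j =>
      mem_iInter₂.1 (mem_iInter.1 hp (-j).toNat).2 j (by simp only [mem_Ici]; omega)
    exact hγ.not_ge (by simpa [huv] using (mem_iInter.1 hp 0).1)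
  obtain ⟨N, hN⟩ := isCompact_univ.elim_directed_family_closed t ht_closed ht_empty
    ht_anti.directed_ge
  refine ⟨N, fun u v huv => not_le.1 fun hγuv => ?_⟩
  exact (eq_empty_iff_forall_notMem.1 hN) (u, v) ⟨trivial, hγuv, mem_iInter₂.2 huv⟩

end Expansive

theorem uniform_contraction_stable_sets_general {X : Type*} [MetricSpace X] [CompactSpace X]
    (f : Equiv.Perm X) (hf : Continuous f) (hf' : Continuous f.symm)
    (δ : ℝ)
    (hexp : ∀ x y : X, (∀ n : ℤ, dist ((f ^ n) x) ((f ^ n) y) ≤ δ) → x = y) :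
    ∀ γ : ℝ, 0 < γ → γ < δ → ∃ N : ℕ, ∀ n : ℕ, N ≤ n → ∀ x : X,
      (f ^ n) '' Ws f δ x ⊆ Ws f γ ((f ^ n) x) := by
  intro γ hγ _
  obtain ⟨N, hN⟩ :=
    exists_dist_lt_of_forall_dist_zpow_le (Equiv.Perm.continuous_zpow hf hf') hexp hγ
  refine ⟨N, fun n hn x => ?_⟩
  rintro _ ⟨y, hy, rfl⟩ k
  simp only [← Equiv.Perm.mul_apply, ← pow_add]
  refine (hN _ _ fun j hj => ?_).le
  simp only [Equiv.Perm.zpow_apply_pow_apply]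
  exact dist_zpow_le_of_mem_Ws hy (by omega)

/-- Uniform contraction of local stable sets of an expansive homeomorphism:
for every 0 < γ < δ there is N such that fⁿ(W^s_δ(x)) ⊆ W^s_γ(fⁿ(x)) for all
n ≥ N and all x. -/
theorem uniform_contraction_stable_sets {X : Type*} [MetricSpace X] [CompactSpace X]
    (f : Equiv.Perm X) (hf : Continuous f) (hf' : Continuous f.symm)
    (δ : ℝ) (hδ : 0 < δ)
    (hexp : ∀ x y : X, (∀ n : ℤ, dist ((f ^ n) x) ((f ^ n) y) ≤ δ) → x = y) :
    ∀ γ : ℝ, 0 < γ → γ < δ → ∃ N : ℕ, ∀ n : ℕ, N ≤ n → ∀ x : X,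
      (f ^ n) '' Ws f δ x ⊆ Ws f γ ((f ^ n) x) :=
  uniform_contraction_stable_sets_general f hf hf' δ hexp
end

section
/- Let f : X → X be an expansive homeomorphism of a compact metric space. Call x a stable point if the family { W^s_ε(x) }_{ε>0} is a neighborhood basis of x (equivalently, for every ε > 0 there is η > 0 with B_η(x) ⊆ W^s_ε(x)). If x is a recurrent stable point (x ∈ ω(x)), then x is periodic. -/
open Metric Filter Topology Set

/-- ω-limit set of a point. -/
def omegaSet {X : Type*} [MetricSpace X] (f : Equiv.Perm X) (x : X) : Set X :=
  {z | ∃ s : ℕ → ℕ, StrictMono s ∧ Tendsto (fun k => (f ^ s k) x) atTop (nhds z)}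

lemma cont_perm_pow {X : Type*} [MetricSpace X] (f : Equiv.Perm X) (hf : Continuous f) :
    ∀ n : ℕ, Continuous (f ^ n : Equiv.Perm X) := by
  intro n
  induction n with
  | zero => simpa using continuous_id
  | succ n ih =>
    have h : ((f ^ (n + 1) : Equiv.Perm X) : X → X) = ((f ^ n : Equiv.Perm X) : X → X) ∘ f := by
      ext y; simp [pow_succ, Equiv.Perm.mul_apply]
    rw [h]; exact ih.comp hf

lemma cont_perm_zpow {X : Type*} [MetricSpace X] (f : Equiv.Perm X) (hf : Continuous f)
    (hf' : Continuous f.symm) : ∀ i : ℤ, Continuous (f ^ i : Equiv.Perm X) := by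
  intro i
  obtain ⟨n, rfl | rfl⟩ := i.eq_nat_or_neg
  · rw [zpow_natCast]; exact cont_perm_pow f hf n
  · rw [zpow_neg, zpow_natCast, ← inv_pow]
    have h : ((f⁻¹ : Equiv.Perm X) : X → X) = f.symm := rfl
    exact cont_perm_pow f⁻¹ (by rw [h]; exact hf') n

lemma uniform_expansive {X : Type*} [MetricSpace X] [CompactSpace X]
    (f : Equiv.Perm X) (hf : Continuous f) (hf' : Continuous f.symm)
    (δ : ℝ) (hδ : 0 < δ)
    (hexp : ∀ x y : X, (∀ n : ℤ, dist ((f ^ n) x) ((f ^ n) y) ≤ δ) → x = y) :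
    ∃ N : ℕ, ∀ y z : X,
      (∀ i : ℤ, i.natAbs ≤ N → dist ((f ^ i) y) ((f ^ i) z) ≤ δ) → dist y z ≤ δ / 2 := by
  by_contra h
  push_neg at h
  choose y z hw hd using h
  obtain ⟨a, -, φ, hφ, hconv⟩ :=
    isCompact_univ.tendsto_subseq (fun N => (mem_univ (⟨y N, z N⟩ : X × X)))
  have ha : a.1 = a.2 := by
    apply hexp
    intro i
    have hc : Continuous fun p : X × X => dist ((f ^ i) p.1) ((f ^ i) p.2) :=
      ((cont_perm_zpow f hf hf' i).comp continuous_fst).dist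
        ((cont_perm_zpow f hf hf' i).comp continuous_snd)
    refine le_of_tendsto ((hc.tendsto a).comp hconv) ?_
    filter_upwards [eventually_ge_atTop i.natAbs] with N hN
    exact hw (φ N) i (hN.trans hφ.le_apply)
  have hge : δ / 2 ≤ dist a.1 a.2 := by
    have hc : Continuous fun p : X × X => dist p.1 p.2 := continuous_fst.dist continuous_snd
    refine ge_of_tendsto ((hc.tendsto a).comp hconv) ?_
    filter_upwards with N using (hd (φ N)).le
  rw [ha, dist_self] at hge
  linarith

/-- A recurrent stable point of an expansive homeomorphism is periodic. -/
theorem recurrent_stable_point_is_periodic {X : Type*} [MetricSpace X] [CompactSpace X]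
    (f : Equiv.Perm X) (hf : Continuous f) (hf' : Continuous f.symm)
    (δ : ℝ) (hδ : 0 < δ)
    (hexp : ∀ x y : X, (∀ n : ℤ, dist ((f ^ n) x) ((f ^ n) y) ≤ δ) → x = y)
    (x : X)
    (hstable : ∀ ε : ℝ, 0 < ε → ∃ η > 0, Metric.ball x η ⊆ Ws f ε x)
    (hrec : x ∈ omegaSet f x) :
    ∃ k : ℕ, 1 ≤ k ∧ (f ^ k) x = x := by
  set ε : ℝ := δ / 8 with hε
  have hεpos : 0 < ε := by positivity
  obtain ⟨η, hη, hball⟩ := hstable ε hεpos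
  obtain ⟨s, hs, hlim⟩ := hrec
  -- basic algebra helpers
  have hcomp : ∀ a b : ℤ, (f ^ (a + b)) x = (f ^ a) ((f ^ b) x) := by
    intro a b; rw [zpow_add]; rfl
  have hnat : ∀ n : ℕ, (f ^ (n : ℤ)) x = (f ^ n) x := by
    intro n; rw [zpow_natCast]
  -- K such that the returns are in the ball
  have hev : ∀ᶠ k in atTop, (f ^ s k) x ∈ Metric.ball x η := hlim (ball_mem_nhds x hη)
  obtain ⟨K, hK⟩ := eventually_atTop.mp hev
  -- S1, nat version
  have hS1 : ∀ k, K ≤ k → ∀ n : ℕ, dist ((f ^ n) x) ((f ^ (n + s k)) x) ≤ ε := by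
    intro k hk n
    have h := hball (hK k hk) n
    have h2 : (f ^ (n + s k)) x = (f ^ n) ((f ^ s k) x) := by
      rw [pow_add]; rfl
    rw [h2]; exact h
  -- S1, int version
  have hS1' : ∀ k, K ≤ k → ∀ a : ℤ, 0 ≤ a →
      dist ((f ^ a) x) ((f ^ (a + s k)) x) ≤ ε := by
    intro k hk a ha
    obtain ⟨n, rfl⟩ := Int.eq_ofNat_of_zero_le ha
    have h1 : ((n : ℤ) + (s k : ℤ)) = ((n + s k : ℕ) : ℤ) := by push_cast; ring
    rw [hnat n, h1, hnat (n + s k)]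
    exact hS1 k hk n
  -- S2 : differences are also in stable sets
  have hS2 : ∀ j k, K ≤ j → j < k → ∀ a : ℤ, 0 ≤ a →
      dist ((f ^ a) x) ((f ^ (a + s k - s j)) x) ≤ 2 * ε := by
    intro j k hj hjk a ha
    have hsjk : (s j : ℤ) ≤ s k := by exact_mod_cast (hs hjk).le
    have h1 : dist ((f ^ a) x) ((f ^ (a + s k)) x) ≤ ε := hS1' k (hj.trans hjk.le) a ha
    have h2 : dist ((f ^ (a + s k - s j)) x) ((f ^ (a + s k - s j + s j)) x) ≤ ε :=
      hS1' j hj _ (by linarith)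
    have h3 : a + (s k : ℤ) - s j + s j = a + s k := by ring
    rw [h3] at h2
    calc dist ((f ^ a) x) ((f ^ (a + s k - s j)) x)
        ≤ dist ((f ^ a) x) ((f ^ (a + s k)) x)
          + dist ((f ^ (a + s k)) x) ((f ^ (a + s k - s j)) x) := dist_triangle _ _ _
      _ ≤ ε + ε := add_le_add h1 (by rw [dist_comm]; exact h2)
      _ = 2 * ε := by ring
  -- A : two-sided control
  have hA : ∀ j, K ≤ j → ∀ q : ℤ, -(s j : ℤ) ≤ q →
      dist ((f ^ (q + s j)) x) ((f ^ q) x) ≤ 2 * ε := by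
    intro j hj q hq
    have hT : Tendsto (fun k => (f ^ q) ((f ^ s k) x)) atTop (nhds ((f ^ q) x)) :=
      (((cont_perm_zpow f hf hf' q)).tendsto x).comp hlim
    refine le_of_tendsto (tendsto_const_nhds.dist hT) ?_
    filter_upwards [eventually_gt_atTop j] with k hk
    have e1 : (f ^ q) ((f ^ s k) x) = (f ^ (q + (s k : ℤ))) x := by
      rw [hcomp q (s k), hnat (s k)]
    rw [e1]
    have h := hS2 j k hj hk (q + s j) (by linarith)
    have h3 : q + (s j : ℤ) + s k - s j = q + s k := by ring
    rw [h3] at h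
    exact h
  -- uniform expansivity
  obtain ⟨N, hN⟩ := uniform_expansive f hf hf' δ hδ hexp
  set m : ℕ := s (K + 1) with hmdef
  have hm1 : 1 ≤ m := le_trans (Nat.le_add_left 1 K) hs.le_apply
  have hjK : K ≤ K + 1 := Nat.le_succ K
  -- B : far-forward control for period m
  have hB : ∀ Q : ℤ, (N : ℤ) ≤ Q → dist ((f ^ Q) x) ((f ^ (Q + m)) x) ≤ δ / 2 := by
    intro Q hQ
    apply hN
    intro i hi
    have habs : -(N : ℤ) ≤ i ∧ i ≤ (N : ℤ) := by
      constructor <;>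
      · have h1 : ((i.natAbs : ℤ)) ≤ N := by exact_mod_cast hi
        have h2 : |i| = (i.natAbs : ℤ) := Int.abs_eq_natAbs i
        have := abs_le.mp (le_of_eq_of_le h2 h1)
        omega
    rw [← hcomp i Q, ← hcomp i (Q + m)]
    have h3 : i + (Q + (m : ℤ)) = (i + Q) + m := by ring
    rw [h3]
    have h4 : (0 : ℤ) ≤ i + Q := by omega
    have := hS1' (K + 1) hjK (i + Q) h4
    calc dist ((f ^ (i + Q)) x) ((f ^ (i + Q + m)) x) ≤ ε := this
      _ ≤ δ := by rw [hε]; linarith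
  -- key : period m within δ at all integer times
  have key : ∀ q : ℤ, dist ((f ^ q) x) ((f ^ (q + m)) x) ≤ δ := by
    intro q
    set j : ℕ := K + 1 + q.natAbs + N with hjdef
    have hjK' : K ≤ j := by omega
    have hsj : (q.natAbs + N : ℕ) ≤ s j := le_trans (by omega) hs.le_apply
    have hsj' : ((q.natAbs : ℤ)) + N ≤ (s j : ℤ) := by exact_mod_cast hsj
    have hqabs : -(q.natAbs : ℤ) ≤ q ∧ q ≤ (q.natAbs : ℤ) := by omega
    have h1 : -(s j : ℤ) ≤ q := by omega
    have h2 : (N : ℤ) ≤ q + s j := by omega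
    have t1 : dist ((f ^ q) x) ((f ^ (q + s j)) x) ≤ 2 * ε := by
      rw [dist_comm]; exact hA j hjK' q h1
    have t2 : dist ((f ^ (q + s j)) x) ((f ^ (q + s j + m)) x) ≤ δ / 2 := hB (q + s j) h2
    have t3 : dist ((f ^ (q + s j + m)) x) ((f ^ (q + m)) x) ≤ 2 * ε := by
      have h5 : q + (m : ℤ) + s j = q + s j + m := by ring
      have := hA j hjK' (q + m) (by omega)
      rw [h5] at this
      exact this
    calc dist ((f ^ q) x) ((f ^ (q + m)) x)
        ≤ dist ((f ^ q) x) ((f ^ (q + s j)) x)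
          + dist ((f ^ (q + s j)) x) ((f ^ (q + s j + m)) x)
          + dist ((f ^ (q + s j + m)) x) ((f ^ (q + m)) x) := dist_triangle4 _ _ _ _
      _ ≤ 2 * ε + δ / 2 + 2 * ε := by linarith
      _ ≤ δ := by rw [hε]; linarith
  have hx : x = (f ^ (m : ℤ)) x := by
    apply hexp
    intro n
    rw [← hcomp n m]
    exact key n
  exact ⟨m, hm1, by rw [← hnat m]; exact hx.symm⟩
end

section
/- Let f : X → X be an expansive homeomorphism of a compact metric space. If x is a stable point (i.e., { W^s_ε(x) }_{ε>0} is a neighborhood basis of x), then there is an open neighborhood of x all of whose points are stable points. -/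
open Metric Filter Topology Set

/-- A point is stable if its local stable sets form a neighborhood basis. -/
def IsStablePoint {X : Type*} [MetricSpace X] (f : Equiv.Perm X) (x : X) : Prop :=
  ∀ ε : ℝ, 0 < ε → ∃ η > 0, Metric.ball x η ⊆ Ws f ε x

theorem Equiv.Perm.continuous_zpow_s7 {X : Type*} [TopologicalSpace X] {f : Equiv.Perm X}
    (hf : Continuous f) (hf' : Continuous f.symm) (k : ℤ) : Continuous ⇑(f ^ k) := by
  induction k using Int.induction_on with
  | zero => exact continuous_id
  | succ n ih => rw [zpow_add_one, Equiv.Perm.coe_mul]; exact ih.comp hf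
  | pred n ih => rw [zpow_sub_one, Equiv.Perm.coe_mul]; exact ih.comp hf'

theorem exists_forall_natAbs_le_dist_le_imp_dist_lt {X : Type*} [MetricSpace X] [CompactSpace X]
    {g : ℤ → X → X} (hg : ∀ k, Continuous (g k)) {δ : ℝ}
    (hexp : ∀ x y, (∀ k, dist (g k x) (g k y) ≤ δ) → x = y) {ε : ℝ} (hε : 0 < ε) :
    ∃ N : ℕ, ∀ u v, (∀ k : ℤ, k.natAbs ≤ N → dist (g k u) (g k v) ≤ δ) → dist u v < ε := by
  have hK : IsCompact {p : X × X | ε ≤ dist p.1 p.2} :=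
    (isClosed_le continuous_const (continuous_fst.dist continuous_snd)).isCompact
  have hcover : {p : X × X | ε ≤ dist p.1 p.2} ⊆ ⋃ k, {p | δ < dist (g k p.1) (g k p.2)} := by
    intro p hp
    by_contra hfar
    have hclose : ∀ k, dist (g k p.1) (g k p.2) ≤ δ :=
      fun k => not_lt.1 fun hk => hfar (mem_iUnion.2 ⟨k, hk⟩)
    have hp' : ε ≤ dist p.1 p.2 := hp
    rw [hexp p.1 p.2 hclose, dist_self] at hp'
    exact hε.not_ge hp'
  obtain ⟨s, hs⟩ := hK.elim_finite_subcover _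
    (fun k => isOpen_lt continuous_const
      (((hg k).comp continuous_fst).dist ((hg k).comp continuous_snd))) hcover
  refine ⟨s.sup Int.natAbs, fun u v huv => ?_⟩
  by_contra! hfar
  obtain ⟨k, hk, hk_far⟩ := mem_iUnion₂.1 (hs (show (u, v) ∈ _ from hfar))
  exact (huv k (Finset.le_sup hk)).not_gt hk_far

section Stable

variable {X : Type*} [MetricSpace X] {f : Equiv.Perm X}

theorem dist_pow_le_of_mem_Ws {r : ℝ} {x y z : X} (hy : y ∈ Ws f r x) (hz : z ∈ Ws f r x)
    (n : ℕ) : dist ((f ^ n) y) ((f ^ n) z) ≤ r + r :=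
  (dist_triangle_left _ _ _).trans (add_le_add (hy n) (hz n))

theorem eventually_forall_le_dist_pow_le (hf : Continuous f) (y : X) (N : ℕ) {ε : ℝ}
    (hε : 0 < ε) : ∀ᶠ z in 𝓝 y, ∀ n ∈ Iic N, dist ((f ^ n) y) ((f ^ n) z) ≤ ε := by
  refine (finite_Iic N).eventually_all.2 fun n _ => ?_
  have hcont : Continuous ⇑(f ^ n) := Equiv.Perm.coe_pow f n ▸ hf.iterate n
  filter_upwards [hcont.continuousAt (closedBall_mem_nhds _ hε)] with z hz
  exact (dist_comm _ _).trans_le hz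

theorem dist_pow_lt_of_forall_dist_pow_le {δ ε : ℝ} {N : ℕ}
    (hN : ∀ u v, (∀ k : ℤ, k.natAbs ≤ N → dist ((f ^ k) u) ((f ^ k) v) ≤ δ) → dist u v < ε)
    {y z : X} (hyz : ∀ m : ℕ, dist ((f ^ m) y) ((f ^ m) z) ≤ δ) {n : ℕ} (hn : N ≤ n) :
    dist ((f ^ n) y) ((f ^ n) z) < ε := by
  refine hN _ _ fun k hk => ?_
  have hnonneg : k + n = ((k + n).toNat : ℤ) := by omega
  rw [← Equiv.Perm.mul_apply, ← Equiv.Perm.mul_apply, ← zpow_natCast, ← zpow_add, hnonneg,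
    zpow_natCast]
  exact hyz _

end Stable

/-- The set of stable points of an expansive homeomorphism is open: any stable
point has an open neighborhood consisting of stable points. -/
theorem stable_points_open {X : Type*} [MetricSpace X] [CompactSpace X]
    (f : Equiv.Perm X) (hf : Continuous f) (hf' : Continuous f.symm)
    (δ : ℝ) (hδ : 0 < δ)
    (hexp : ∀ x y : X, (∀ n : ℤ, dist ((f ^ n) x) ((f ^ n) y) ≤ δ) → x = y)
    (x : X) (hx : IsStablePoint f x) :
    ∃ U : Set X, IsOpen U ∧ x ∈ U ∧ ∀ y ∈ U, IsStablePoint f y := by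
  obtain ⟨η₀, hη₀, hshadow⟩ := hx (δ / 2) (half_pos hδ)
  refine ⟨ball x η₀, isOpen_ball, mem_ball_self hη₀, fun y hy ε hε => ?_⟩
  obtain ⟨N, hN⟩ := exists_forall_natAbs_le_dist_le_imp_dist_lt
    (Equiv.Perm.continuous_zpow_s7 hf hf') hexp hε
  obtain ⟨η, hη, hnear⟩ := eventually_nhds_iff_ball.1
    ((eventually_forall_le_dist_pow_le hf y N hε).and (isOpen_ball.mem_nhds hy))
  refine ⟨η, hη, fun z hz n => ?_⟩
  obtain ⟨hinit, hz₀⟩ := hnear z hz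
  rcases le_or_gt n N with hn | hn
  · exact hinit n hn
  · have hyz := dist_pow_le_of_mem_Ws (hshadow hy) (hshadow hz₀)
    rw [add_halves] at hyz
    exact (dist_pow_lt_of_forall_dist_pow_le hN hyz hn.le).le
end

section
/- Let f : X → X be an expansive homeomorphism of a compact metric space X with expansiveness constant δ, and suppose X has no stable points and no unstable points. Then for every 0 < ε < δ and every η > 0 there exists K ∈ ℕ such that for all x ∈ X the dynamical ball B(x, K, ε) = { y : d(fⁱ(x), fⁱ(y)) ≤ ε for 0 ≤ i ≤ K } does not contain the ball B_η(x), and likewise for the backward dynamical ball. -/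
open Metric Filter Topology Set

/-- Local unstable set of an invertible map. -/
def Wu {X : Type*} [MetricSpace X] (f : Equiv.Perm X) (ε : ℝ) (x : X) : Set X :=
  {y | ∀ n : ℕ, dist ((f ^ (-(n : ℤ))) x) ((f ^ (-(n : ℤ))) y) ≤ ε}

/-- A point is unstable if its local unstable sets form a neighborhood basis. -/
def IsUnstablePoint {X : Type*} [MetricSpace X] (f : Equiv.Perm X) (x : X) : Prop :=
  ∀ ε : ℝ, 0 < ε → ∃ η > 0, Metric.ball x η ⊆ Wu f ε x

/-!
Expansiveness on a compact space is uniform: orbits that stay δ-close for all times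
`|n| ≤ N` are ε'-close at time `0`. So if a ball `B(x, r)` lies in `Ws f ε x` with `ε ≤ δ`,
the orbits from that ball are uniformly close from time `N` on, while the first `N`
iterates are controlled by continuity: `x` is stable. If the theorem failed for `ε, η`,
the closed sets `{x | B(x, η) ⊆ B(x, K, ε)}` would be nonempty and decreasing in `K`,
and any point of their intersection would be stable. The backward half is the forward
one for `f⁻¹`.
-/

section

variable {X : Type*} [MetricSpace X]

def IsExpansive (f : Equiv.Perm X) (δ : ℝ) : Prop :=
  ∀ x y : X, (∀ n : ℤ, dist ((f ^ n) x) ((f ^ n) y) ≤ δ) → x = y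

def dynBall (f : Equiv.Perm X) (K : ℕ) (ε : ℝ) (x : X) : Set X :=
  {y | ∀ i ≤ K, dist ((f ^ i) x) ((f ^ i) y) ≤ ε}

variable {f : Equiv.Perm X} {δ ε η : ℝ} {x : X}

lemma continuous_coe_zpow (hf : Continuous f) (hf' : Continuous f.symm) (n : ℤ) :
    Continuous (f ^ n) := by
  obtain ⟨n, rfl | rfl⟩ := n.eq_nat_or_neg
  · simpa only [zpow_natCast, Equiv.Perm.coe_pow] using hf.iterate n
  · rw [zpow_neg, zpow_natCast, ← inv_pow, Equiv.Perm.coe_pow]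
    exact hf'.iterate n

lemma IsExpansive.inv (hexp : IsExpansive f δ) : IsExpansive f⁻¹ δ := fun x y h =>
  hexp x y fun n => by simpa only [inv_zpow', neg_neg] using h (-n)

lemma Ws_inv : Ws f⁻¹ ε x = Wu f ε x := by
  simp only [Ws, Wu, ← zpow_natCast, inv_zpow']

lemma isStablePoint_inv : IsStablePoint f⁻¹ x ↔ IsUnstablePoint f x := by
  simp only [IsStablePoint, IsUnstablePoint, Ws_inv]

lemma dynBall_inv (K : ℕ) : dynBall f⁻¹ K ε x =
    {y | ∀ i : ℕ, i ≤ K → dist ((f ^ (-(i : ℤ))) x) ((f ^ (-(i : ℤ))) y) ≤ ε} := by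
  simp only [dynBall, ← zpow_natCast, inv_zpow']

lemma dynBall_anti {K L : ℕ} (h : K ≤ L) : dynBall f L ε x ⊆ dynBall f K ε x :=
  fun _ hy i hi => hy i (hi.trans h)

lemma iInter_dynBall : ⋂ K, dynBall f K ε x = Ws f ε x := by
  ext y
  simp only [mem_iInter, dynBall, Ws, mem_ofPred_eq]
  exact ⟨fun h n => h n n le_rfl, fun h _ i _ => h i⟩

lemma isStablePoint_iff : IsStablePoint f x ↔ ∀ ε > 0, ∀ᶠ y in 𝓝 x, y ∈ Ws f ε x := by
  simp only [IsStablePoint, Metric.eventually_nhds_iff, subset_def, mem_ball]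

lemma isClosed_setOf_ball_subset_dynBall (hf : Continuous f) (K : ℕ) (ε η : ℝ) :
    IsClosed {x | ball x η ⊆ dynBall f K ε x} := by
  simp only [subset_def, mem_ball]
  rw [ofPred_forall]
  refine isClosed_iInter fun y => isClosed_imp ?_ ?_
  · exact isOpen_lt (continuous_const.dist continuous_id) continuous_const
  · simp only [dynBall, mem_ofPred_eq, mem_iInter, ofPred_forall]
    exact isClosed_iInter fun i => isClosed_iInter fun _ =>
      isClosed_le ((hf.iterate i).dist continuous_const) continuous_const

variable [CompactSpace X]

theorem IsExpansive.exists_dist_lt (hexp : IsExpansive f δ) (hf : Continuous f)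
    (hf' : Continuous f.symm) (hε : 0 < ε) :
    ∃ N : ℕ, ∀ y z : X,
      (∀ n : ℤ, |n| ≤ N → dist ((f ^ n) y) ((f ^ n) z) ≤ δ) → dist y z < ε := by
  let t : ℕ → Set (X × X) := fun N =>
    {p | ε ≤ dist p.1 p.2 ∧ ∀ n : ℤ, |n| ≤ N → dist ((f ^ n) p.1) ((f ^ n) p.2) ≤ δ}
  have htc : ∀ N, IsClosed (t N) := fun N => by
    simp only [t, ofPred_and, ofPred_forall]
    exact (isClosed_le continuous_const (continuous_fst.dist continuous_snd)).inter <|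
      isClosed_iInter fun n => isClosed_iInter fun _ =>
        isClosed_le (((continuous_coe_zpow hf hf' n).comp continuous_fst).dist
          ((continuous_coe_zpow hf hf' n).comp continuous_snd)) continuous_const
  have hanti : Antitone t := fun M N hMN p hp =>
    ⟨hp.1, fun n hn => hp.2 n (hn.trans (by exact_mod_cast hMN))⟩
  have hempty : univ ∩ ⋂ N, t N = ∅ := by
    refine eq_empty_of_forall_notMem fun p ⟨_, hp⟩ => ?_
    rw [mem_iInter] at hp
    have hp₀ := (hp 0).1
    rw [hexp p.1 p.2 fun n => (hp n.natAbs).2 n (Int.abs_eq_natAbs n).le, dist_self] at hp₀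
    linarith
  obtain ⟨N, hN⟩ := isCompact_univ.elim_directed_family_closed t htc hempty hanti.directed_ge
  refine ⟨N, fun y z h => not_le.1 fun hyz => ?_⟩
  exact hN.subset (⟨mem_univ (y, z), hyz, h⟩ : (y, z) ∈ univ ∩ t N)

theorem isStablePoint_of_ball_subset_Ws (hexp : IsExpansive f δ) (hf : Continuous f)
    (hf' : Continuous f.symm) (hεδ : ε ≤ δ) {r : ℝ} (hr : 0 < r)
    (hsub : ball x r ⊆ Ws f ε x) : IsStablePoint f x := by
  rw [isStablePoint_iff]
  intro ε' hε'
  obtain ⟨N, hN⟩ := hexp.exists_dist_lt hf hf' hε'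
  have hhead : ∀ᶠ y in 𝓝 x, ∀ n ∈ Iic N, dist ((f ^ n) x) ((f ^ n) y) < ε' :=
    (finite_Iic N).eventually_all.2 fun n _ =>
      ((hf.iterate n).continuousAt.eventually_mem (ball_mem_nhds _ hε')).mono
        fun _ hy => mem_ball'.1 hy
  filter_upwards [hhead, ball_mem_nhds x hr] with y hy hyr n
  rcases le_or_gt n N with hn | hn
  · exact (hy n hn).le
  refine (hN _ _ fun m hm => ?_).le
  have hk : 0 ≤ m + n := by have := neg_abs_le m; omega
  have hshift : ∀ w, (f ^ m) ((f ^ n) w) = (f ^ (m + n).toNat) w := fun w => by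
    rw [← zpow_natCast, ← Equiv.Perm.mul_apply, ← zpow_add, ← zpow_natCast,
      Int.toNat_of_nonneg hk]
  rw [hshift, hshift]
  exact (hsub hyr _).trans hεδ

lemma exists_ball_subset_Ws_of_forall_exists_ball_subset_dynBall (hf : Continuous f)
    (h : ∀ K, ∃ x, ball x η ⊆ dynBall f K ε x) : ∃ x, ball x η ⊆ Ws f ε x := by
  obtain ⟨x, hx⟩ := IsCompact.nonempty_iInter_of_sequence_nonempty_isCompact_isClosed
    (fun K => {x | ball x η ⊆ dynBall f K ε x})
    (fun K _ hx => hx.trans (dynBall_anti K.le_succ)) h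
    (isClosed_setOf_ball_subset_dynBall hf 0 ε η).isCompact
    (isClosed_setOf_ball_subset_dynBall hf · ε η)
  rw [mem_iInter] at hx
  exact ⟨x, by rw [← iInter_dynBall]; exact subset_iInter hx⟩

theorem exists_forall_not_ball_subset_dynBall (hexp : IsExpansive f δ) (hf : Continuous f)
    (hf' : Continuous f.symm) (hnostable : ∀ x, ¬ IsStablePoint f x) (hεδ : ε ≤ δ)
    (hη : 0 < η) : ∃ K, ∀ x, ¬ ball x η ⊆ dynBall f K ε x := by
  by_contra! h
  obtain ⟨x, hx⟩ := exists_ball_subset_Ws_of_forall_exists_ball_subset_dynBall hf h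
  exact hnostable x (isStablePoint_of_ball_subset_Ws hexp hf hf' hεδ hη hx)

end

theorem uniform_dynamical_ball_escape_general {X : Type*} [MetricSpace X] [CompactSpace X]
    (f : Equiv.Perm X) (hf : Continuous f) (hf' : Continuous f.symm)
    (δ : ℝ)
    (hexp : ∀ x y : X, (∀ n : ℤ, dist ((f ^ n) x) ((f ^ n) y) ≤ δ) → x = y)
    (hnostable : ∀ x : X, ¬ IsStablePoint f x)
    (hnounstable : ∀ x : X, ¬ IsUnstablePoint f x) :
    ∀ ε : ℝ, 0 < ε → ε < δ → ∀ η : ℝ, 0 < η → ∃ K : ℕ, ∀ x : X,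
      ¬ (Metric.ball x η ⊆
          {y | ∀ i : ℕ, i ≤ K → dist ((f ^ i) x) ((f ^ i) y) ≤ ε}) ∧
      ¬ (Metric.ball x η ⊆
          {y | ∀ i : ℕ, i ≤ K → dist ((f ^ (-(i : ℤ))) x) ((f ^ (-(i : ℤ))) y) ≤ ε}) := by
  intro ε _ hεδ η hη
  have hexp : IsExpansive f δ := hexp
  obtain ⟨K₁, hK₁⟩ := exists_forall_not_ball_subset_dynBall hexp hf hf' hnostable hεδ.le hη
  obtain ⟨K₂, hK₂⟩ := exists_forall_not_ball_subset_dynBall (f := f⁻¹) hexp.inv hf' hf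
    (fun x => isStablePoint_inv.not.2 (hnounstable x)) hεδ.le hη
  refine ⟨max K₁ K₂, fun x => ⟨fun h => hK₁ x ?_, fun h => hK₂ x ?_⟩⟩
  · exact h.trans (dynBall_anti (le_max_left _ _))
  · rw [← dynBall_inv] at h
    exact h.trans (dynBall_anti (le_max_right _ _))

/-- Uniform non-stability: with no stable and no unstable points, for every
0 < ε < δ and η > 0 there is K such that no forward (or backward) K-dynamical
ε-ball contains a metric η-ball. -/
theorem uniform_dynamical_ball_escape {X : Type*} [MetricSpace X] [CompactSpace X]
    (f : Equiv.Perm X) (hf : Continuous f) (hf' : Continuous f.symm)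
    (δ : ℝ) (hδ : 0 < δ)
    (hexp : ∀ x y : X, (∀ n : ℤ, dist ((f ^ n) x) ((f ^ n) y) ≤ δ) → x = y)
    (hnostable : ∀ x : X, ¬ IsStablePoint f x)
    (hnounstable : ∀ x : X, ¬ IsUnstablePoint f x) :
    ∀ ε : ℝ, 0 < ε → ε < δ → ∀ η : ℝ, 0 < η → ∃ K : ℕ, ∀ x : X,
      ¬ (Metric.ball x η ⊆
          {y | ∀ i : ℕ, i ≤ K → dist ((f ^ i) x) ((f ^ i) y) ≤ ε}) ∧
      ¬ (Metric.ball x η ⊆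
          {y | ∀ i : ℕ, i ≤ K → dist ((f ^ (-(i : ℤ))) x) ((f ^ (-(i : ℤ))) y) ≤ ε}) :=
  uniform_dynamical_ball_escape_general f hf hf' δ hexp hnostable hnounstable
end

section
/- On the solid torus M = S¹ × D² (with D² the closed unit disk), the flow generated by the vector field ρ·X, where X is the unit vector field tangent to the S¹ direction and ρ : S¹ → [0,1] is a continuous function vanishing at exactly one point θ₀ ∈ S¹ (ρ(θ) = 1 outside a neighborhood of θ₀, ρ(θ) comparable to the distance to θ₀ near θ₀), has the property that for every regular point p, every t > 0 and every δ > 0, the local rescaled stable and unstable sets of p are trivial: W^{r,s}_{δ,t}(p) = W^{r,u}_{δ,t}(p) = {p}. -/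
/-!
The S¹-coordinate of the flow lifts to a solution `c` of `c' = ρ(c)` on `ℝ`. Since
`ρ ≤ K · dist(·, θ₀)`, the lifts of `θ₀` are equilibria that no other solution can reach, so the
monotone solution through a regular point stays between two consecutive lifts of `θ₀` and
converges to them as `t → ±∞`; there `ρ` vanishes. The flow moves the disk coordinate rigidly,
so a point of the section through `p` lies in the rescaled stable (unstable) set only if its
distance to `p` is at most `δ · ρ(Θ_{±nt} θ_p) → 0`.
-/

open Filter Topology Set

open scoped NNReal

theorem AddCircle.dist_coe_le_abs_sub {p : ℝ} (x y : ℝ) :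
    dist (x : AddCircle p) (y : AddCircle p) ≤ |x - y| := by
  rw [dist_eq_norm, ← AddCircle.coe_sub]
  exact QuotientAddGroup.norm_mk_le_norm

theorem AddCircle.coe_toIocMod {p : ℝ} (hp : 0 < p) (a x : ℝ) :
    ((toIocMod hp a x : ℝ) : AddCircle p) = x := by
  rw [toIocMod, AddCircle.coe_sub, AddCircle.coe_zsmul, AddCircle.coe_period, smul_zero, sub_zero]

theorem exists_nnreal_le_mul_dist {X : Type*} [PseudoMetricSpace X] {f : X → ℝ} {x₀ : X}
    {ε M C : ℝ} (hε : 0 < ε) (hfar : ∀ x, ε ≤ dist x x₀ → f x ≤ M)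
    (hnear : ∀ x, dist x x₀ < ε → f x ≤ C * dist x x₀) :
    ∃ K : ℝ≥0, ∀ x, f x ≤ K * dist x x₀ := by
  refine ⟨(max C (|M| / ε)).toNNReal, fun x => ?_⟩
  have hK : max C (|M| / ε) ≤ (max C (|M| / ε)).toNNReal := Real.le_coe_toNNReal _
  rcases lt_or_ge (dist x x₀) ε with h | h
  · calc f x ≤ C * dist x x₀ := hnear x h
      _ ≤ _ := by gcongr; exact (le_max_left _ _).trans hK
  · calc f x ≤ |M| / ε * ε := by
          rw [div_mul_cancel₀ _ hε.ne']; exact (hfar x h).trans (le_abs_self M)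
      _ ≤ |M| / ε * dist x x₀ := by gcongr
      _ ≤ _ := by gcongr; exact (le_max_right _ _).trans hK

theorem eq_zero_of_hasDerivAt_of_tendsto_atTop {f f' : ℝ → ℝ} {L ℓ : ℝ}
    (hf : ∀ t, HasDerivAt f (f' t) t) (hfL : Tendsto f atTop (𝓝 L))
    (hf' : Tendsto f' atTop (𝓝 ℓ)) : ℓ = 0 := by
  have hslope : ∀ n : ℕ, ∃ ξ ∈ Ioo (n : ℝ) (n + 1), f' ξ = f (n + 1) - f n := fun n => by
    simpa using exists_hasDerivAt_eq_slope f f' (lt_add_one (n : ℝ))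
      (fun t _ => (hf t).continuousAt.continuousWithinAt) (fun t _ => hf t)
  choose ξ hξ hξf using hslope
  have hξ_top : Tendsto ξ atTop atTop :=
    tendsto_atTop_mono (fun n => (hξ n).1.le) tendsto_natCast_atTop_atTop
  have hn : Tendsto (fun n : ℕ => (n : ℝ)) atTop atTop := tendsto_natCast_atTop_atTop
  have hdiff : Tendsto (fun n : ℕ => f (n + 1) - f n) atTop (𝓝 (L - L)) :=
    ((hfL.comp (tendsto_atTop_add_const_right _ 1 hn)).sub (hfL.comp hn))
  rw [sub_self] at hdiff
  exact tendsto_nhds_unique ((hf'.comp hξ_top).congr hξf) hdiff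

theorem eq_const_of_hasDerivAt_of_abs_le_mul_abs_sub {v c : ℝ → ℝ} {b S : ℝ} {K : ℝ≥0}
    (hv : ∀ x, |v x| ≤ K * |x - b|) (hc : ∀ t, HasDerivAt c (v (c t)) t) (hS : c S = b) :
    c = fun _ => b := by
  have hvb : v b = 0 := abs_nonpos_iff.mp (by simpa using hv b)
  -- Along `c`, the field `v` agrees with a time-dependent linear field, which is `K`-Lipschitz.
  set k : ℝ → ℝ := fun t => v (c t) / (c t - b)
  have hk : ∀ t, |k t| ≤ K := fun t => by
    rcases eq_or_ne (c t) b with h | h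
    · simp [k, h]
    · rw [abs_div]
      exact div_le_of_le_mul₀ (abs_nonneg _) K.2 (hv (c t))
  have hlin : ∀ t, LipschitzWith K fun x => k t * (x - b) := fun t =>
    LipschitzWith.of_dist_le_mul fun x y => by
      rw [Real.dist_eq, Real.dist_eq, ← mul_sub, sub_sub_sub_cancel_right, abs_mul]
      exact mul_le_mul_of_nonneg_right (hk t) (abs_nonneg _)
  refine ODE_solution_unique_univ (v := fun t x => k t * (x - b)) (s := fun _ => univ)
    (fun t => (hlin t).lipschitzOnWith) (fun t => ⟨?_, trivial⟩)
    (fun t => ⟨by simpa using hasDerivAt_const t b, trivial⟩) hS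
  rcases eq_or_ne (c t) b with h | h
  · simpa [k, h, hvb] using hc t
  · simpa [k, div_mul_cancel₀ _ (sub_ne_zero.mpr h)] using hc t

theorem tendsto_atTop_comp_of_hasDerivAt {v c : ℝ → ℝ} {b : ℝ} {K : ℝ≥0}
    (hv : Continuous v) (hv0 : ∀ x, 0 ≤ v x) (hb : ∀ x, |v x| ≤ K * |x - b|)
    (hc : ∀ t, HasDerivAt c (v (c t)) t) (hc0 : c 0 < b) :
    Tendsto (fun t => v (c t)) atTop (𝓝 0) := by
  have hcont : Continuous c := continuous_iff_continuousAt.2 fun t => (hc t).continuousAt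
  have hlt : ∀ t, c t < b := by
    intro t
    by_contra! h
    obtain ⟨S, hS⟩ : b ∈ range c :=
      (isPreconnected_range hcont).Icc_subset (mem_range_self 0) (mem_range_self t) ⟨hc0.le, h⟩
    exact hc0.ne (congrFun (eq_const_of_hasDerivAt_of_abs_le_mul_abs_sub hb hc hS) 0)
  have hmono : Monotone c := monotone_of_hasDerivAt_nonneg hc fun t => hv0 _
  have hlim : Tendsto c atTop (𝓝 (⨆ t, c t)) :=
    tendsto_atTop_ciSup hmono ⟨b, forall_mem_range.2 fun t => (hlt t).le⟩
  have hvlim := (hv.tendsto _).comp hlim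
  rwa [eq_zero_of_hasDerivAt_of_tendsto_atTop hc hlim hvlim] at hvlim

theorem tendsto_atBot_comp_of_hasDerivAt {v c : ℝ → ℝ} {a : ℝ} {K : ℝ≥0}
    (hv : Continuous v) (hv0 : ∀ x, 0 ≤ v x) (ha : ∀ x, |v x| ≤ K * |x - a|)
    (hc : ∀ t, HasDerivAt c (v (c t)) t) (hc0 : a < c 0) :
    Tendsto (fun t => v (c t)) atBot (𝓝 0) := by
  -- `t ↦ -c (-t)` solves the equation for the field `x ↦ v (-x)`.
  have hrev : ∀ t, HasDerivAt (fun s => -c (-s)) (v (-(-c (-t)))) t := fun t => by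
    simpa [Function.comp_def, Pi.neg_def] using ((hc (-t)).comp t (hasDerivAt_neg t)).neg
  have hv' : ∀ x, |v (-x)| ≤ K * |x - -a| := fun x => by
    rw [show x - -a = -(-x - a) by ring, abs_neg]
    exact ha (-x)
  have := tendsto_atTop_comp_of_hasDerivAt (hv.comp continuous_neg) (fun x => hv0 _) hv' hrev
    (by simpa using hc0)
  simpa [Function.comp_def] using this.comp tendsto_neg_atBot_atTop

theorem AddCircle.tendsto_comp_coe_of_hasDerivAt {p : ℝ} (hp : 0 < p) {ρ : AddCircle p → ℝ}
    {θ₀ : AddCircle p} {K : ℝ≥0} (hρc : Continuous ρ) (hρnn : ∀ θ, 0 ≤ ρ θ)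
    (hK : ∀ θ, ρ θ ≤ K * dist θ θ₀) {c : ℝ → ℝ}
    (hc : ∀ t, HasDerivAt c (ρ (c t)) t) (hc0 : ρ (c 0) ≠ 0) :
    Tendsto (fun t => ρ (c t)) atTop (𝓝 0) ∧ Tendsto (fun t => ρ (c t)) atBot (𝓝 0) := by
  have hv : ∀ y : ℝ, (y : AddCircle p) = θ₀ → ∀ x : ℝ, |ρ x| ≤ K * |x - y| := fun y hy x => by
    rw [abs_of_nonneg (hρnn _)]
    calc ρ x ≤ K * dist (x : AddCircle p) θ₀ := hK _
      _ ≤ K * |x - y| := by rw [← hy]; gcongr; exact AddCircle.dist_coe_le_abs_sub x y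
  have hρθ₀ : ρ θ₀ = 0 := le_antisymm (by simpa using hK θ₀) (hρnn θ₀)
  obtain ⟨y₀, hy₀⟩ := QuotientAddGroup.mk_surjective θ₀
  set a := toIocMod hp (c 0 - p) y₀
  have ha : (a : AddCircle p) = θ₀ := (AddCircle.coe_toIocMod hp _ _).trans hy₀
  have ha' : ((a + p : ℝ) : AddCircle p) = θ₀ := by rw [AddCircle.coe_add_period, ha]
  have hmem := toIocMod_mem_Ioc hp (c 0 - p) y₀
  have hbelow : a < c 0 :=
    lt_of_le_of_ne (by linarith [hmem.2]) fun h => hc0 (by rw [← h, ha, hρθ₀])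
  have hcont : Continuous fun x : ℝ => ρ x := hρc.comp (AddCircle.continuous_mk' p)
  exact ⟨tendsto_atTop_comp_of_hasDerivAt hcont (fun x => hρnn _) (hv _ ha') hc
      (by linarith [hmem.1]),
    tendsto_atBot_comp_of_hasDerivAt hcont (fun x => hρnn _) (hv _ ha) hc hbelow⟩

theorem setOf_fst_eq_forall_dist_le_eq_singleton {X Y : Type*} [MetricSpace Y] (p : X × Y)
    {f : ℕ → ℝ} (hf : Tendsto f atTop (𝓝 0)) (hf0 : ∀ n, 0 ≤ f n) :
    {q : X × Y | q.1 = p.1 ∧ ∀ n, dist p.2 q.2 ≤ f n} = {p} := by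
  ext q
  refine ⟨fun ⟨h1, h2⟩ => Prod.ext h1 (dist_le_zero.mp (ge_of_tendsto hf (.of_forall h2))).symm,
    ?_⟩
  rintro rfl
  exact ⟨rfl, fun n => (dist_self _).trans_le (hf0 n)⟩

theorem solid_torus_trivial_rescaled_sets_general
    (ρ : AddCircle (1 : ℝ) → ℝ) (hρc : Continuous ρ)
    (hρnn : ∀ θ, 0 ≤ ρ θ)
    (θ₀ : AddCircle (1 : ℝ))
    (hshape : ∃ ε > 0, (∀ θ, ε ≤ dist θ θ₀ → ρ θ = 1) ∧
      ∃ c > 0, ∃ C > 0, ∀ θ, dist θ θ₀ < ε →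
        c * dist θ θ₀ ≤ ρ θ ∧ ρ θ ≤ C * dist θ θ₀)
    (Θ : ℝ → AddCircle (1 : ℝ) → AddCircle (1 : ℝ))
    (hgen : ∀ θ : AddCircle (1 : ℝ), ∃ c : ℝ → ℝ,
      ((c 0 : ℝ) : AddCircle (1 : ℝ)) = θ ∧
      (∀ t : ℝ, ((c t : ℝ) : AddCircle (1 : ℝ)) = Θ t θ) ∧
      ∀ t : ℝ, HasDerivAt c (ρ ((c t : ℝ) : AddCircle (1 : ℝ))) t)
    (p : AddCircle (1 : ℝ) × (Metric.closedBall (0 : ℝ × ℝ) 1))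
    (hreg : ρ p.1 ≠ 0) (t : ℝ) (ht : 0 < t) (δ : ℝ) (hδ : 0 < δ) :
    {q : AddCircle (1 : ℝ) × (Metric.closedBall (0 : ℝ × ℝ) 1) |
        q.1 = p.1 ∧ ∀ n : ℕ, dist p.2 q.2 ≤ δ * ρ (Θ ((n : ℝ) * t) p.1)} = {p} ∧
    {q : AddCircle (1 : ℝ) × (Metric.closedBall (0 : ℝ × ℝ) 1) |
        q.1 = p.1 ∧ ∀ n : ℕ, dist p.2 q.2 ≤ δ * ρ (Θ (-((n : ℝ) * t)) p.1)} = {p} := by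
  obtain ⟨ε, hε, hfar, _, _, C, _, hnear⟩ := hshape
  obtain ⟨K, hK⟩ :=
    exists_nnreal_le_mul_dist hε (fun θ h => (hfar θ h).le) (fun θ h => (hnear θ h).2)
  obtain ⟨c, hc0, hcΘ, hc⟩ := hgen p.1
  obtain ⟨hfwd, hbwd⟩ :=
    AddCircle.tendsto_comp_coe_of_hasDerivAt one_pos hρc hρnn hK hc (by rwa [hc0])
  have hnt : Tendsto (fun n : ℕ => (n : ℝ) * t) atTop atTop :=
    tendsto_natCast_atTop_atTop.atTop_mul_const ht
  have hnonneg : ∀ s, 0 ≤ δ * ρ (Θ s p.1) := fun s => mul_nonneg hδ.le (hρnn _)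
  simp only [← hcΘ] at hnonneg ⊢
  exact ⟨setOf_fst_eq_forall_dist_le_eq_singleton p
      (by simpa using (hfwd.comp hnt).const_mul δ) fun n => hnonneg _,
    setOf_fst_eq_forall_dist_le_eq_singleton p
      (by simpa using (hbwd.comp (tendsto_neg_atTop_atBot.comp hnt)).const_mul δ)
      fun n => hnonneg _⟩

/-- Example 3.8: on the solid torus S¹ × D², the flow generated by ρ·X (X the
unit field in the S¹ direction, ρ vanishing at exactly one angle θ₀, equal to 1
away from θ₀ and comparable to the distance to θ₀ near it) preserves each disk
section and acts isometrically between them via the holonomy maps, so the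
rescaled local stable and unstable sets of every regular point p are trivial.
Since the flow is φ_t(θ,d) = (Θ_t θ, d), the holonomy P_{p,nt} sends
q = (θ_p, d') to (Θ_{nt} θ_p, d'); hence the rescaled stable (unstable) set of
p is the set of points q of the section through p with
dist(p.2, q.2) ≤ δ·ρ(Θ_{nt} θ_p) for all n ≥ 0 (n ≤ 0), and it equals {p}. -/
theorem solid_torus_trivial_rescaled_sets
    (ρ : AddCircle (1 : ℝ) → ℝ) (hρc : Continuous ρ)
    (hρnn : ∀ θ, 0 ≤ ρ θ) (hρle : ∀ θ, ρ θ ≤ 1)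
    (θ₀ : AddCircle (1 : ℝ)) (hz : ∀ θ, ρ θ = 0 ↔ θ = θ₀)
    (hshape : ∃ ε > 0, (∀ θ, ε ≤ dist θ θ₀ → ρ θ = 1) ∧
      ∃ c > 0, ∃ C > 0, ∀ θ, dist θ θ₀ < ε →
        c * dist θ θ₀ ≤ ρ θ ∧ ρ θ ≤ C * dist θ θ₀)
    (Θ : ℝ → AddCircle (1 : ℝ) → AddCircle (1 : ℝ))
    (hΘ : Continuous fun p : ℝ × AddCircle (1 : ℝ) => Θ p.1 p.2)
    (h0 : ∀ θ, Θ 0 θ = θ) (hadd : ∀ t s θ, Θ (t + s) θ = Θ t (Θ s θ))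
    (hgen : ∀ θ : AddCircle (1 : ℝ), ∃ c : ℝ → ℝ,
      ((c 0 : ℝ) : AddCircle (1 : ℝ)) = θ ∧
      (∀ t : ℝ, ((c t : ℝ) : AddCircle (1 : ℝ)) = Θ t θ) ∧
      ∀ t : ℝ, HasDerivAt c (ρ ((c t : ℝ) : AddCircle (1 : ℝ))) t)
    (p : AddCircle (1 : ℝ) × (Metric.closedBall (0 : ℝ × ℝ) 1))
    (hreg : ρ p.1 ≠ 0) (t : ℝ) (ht : 0 < t) (δ : ℝ) (hδ : 0 < δ) :
    {q : AddCircle (1 : ℝ) × (Metric.closedBall (0 : ℝ × ℝ) 1) |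
        q.1 = p.1 ∧ ∀ n : ℕ, dist p.2 q.2 ≤ δ * ρ (Θ ((n : ℝ) * t) p.1)} = {p} ∧
    {q : AddCircle (1 : ℝ) × (Metric.closedBall (0 : ℝ × ℝ) 1) |
        q.1 = p.1 ∧ ∀ n : ℕ, dist p.2 q.2 ≤ δ * ρ (Θ (-((n : ℝ) * t)) p.1)} = {p} :=
  solid_torus_trivial_rescaled_sets_general ρ hρc hρnn θ₀ hshape Θ hgen p hreg t ht δ hδ
end

section
/- Let f : X → X be an expansive homeomorphism of a compact metric space with expansiveness constant δ. If x ∈ ω(x) (x is recurrent) and there exists η > 0 such that B_η(x) ⊆ W^s_δ(x), then there exist a sequence n_k → ∞ and a point z such that ⋂_{j ≥ 1} f^{j·n_k}(closure(B_η(x))) is the single point z, and z is periodic for f. -/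
open Metric Filter Topology Set

lemma contPermPow {X : Type*} [TopologicalSpace X] (g : Equiv.Perm X) (hg : Continuous g)
    (n : ℕ) : Continuous ⇑(g ^ n) := by
  induction n with
  | zero => simpa using continuous_id
  | succ n ih =>
    have : ⇑(g ^ (n+1)) = ⇑(g ^ n) ∘ ⇑g := by
      ext y; simp [pow_succ, Equiv.Perm.mul_apply]
    rw [this]; exact ih.comp hg

lemma contPermZpow {X : Type*} [TopologicalSpace X] (f : Equiv.Perm X) (hf : Continuous f)
    (hf' : Continuous f.symm) (m : ℤ) : Continuous ⇑(f ^ m) := by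
  cases m with
  | ofNat n => rw [Int.ofNat_eq_coe, zpow_natCast]; exact contPermPow f hf n
  | negSucc n =>
    rw [zpow_negSucc, ← inv_pow]
    exact contPermPow f⁻¹ hf' (n+1)

lemma apply_zpow_pow {X : Type*} (f : Equiv.Perm X) (m : ℤ) (n : ℕ) (h : 0 ≤ m + n) (x : X) :
    (f ^ m) ((f ^ n) x) = (f ^ (m + n).toNat) x := by
  have h1 : ((f ^ (m + (n:ℤ)).toNat : Equiv.Perm X)) = f ^ (m + (n:ℤ)) := by
    rw [← zpow_natCast, Int.toNat_of_nonneg h]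
  rw [h1, zpow_add, ← zpow_natCast f n]
  rfl

lemma perm_pow_apply_add {X : Type*} (f : Equiv.Perm X) (a b : ℕ) (c : X) :
    (f ^ a) ((f ^ b) c) = (f ^ (a + b)) c := by
  rw [pow_add]; rfl

lemma perm_pow_image_add {X : Type*} (f : Equiv.Perm X) (a b : ℕ) (S : Set X) :
    (f ^ (a + b)) '' S = (f ^ a) '' ((f ^ b) '' S) := by
  rw [← image_comp]
  exact image_congr (fun c _ => (perm_pow_apply_add f a b c).symm)

/-- Uniform contraction on a compact subset of the δ-stable set: the forward
iterates of all points of `K` get uniformly close to those of `x`. -/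
lemma uniform_shrink {X : Type*} [MetricSpace X] [CompactSpace X]
    (f : Equiv.Perm X) (hf : Continuous f) (hf' : Continuous f.symm)
    (δ : ℝ)
    (hexp : ∀ x y : X, (∀ n : ℤ, dist ((f ^ n) x) ((f ^ n) y) ≤ δ) → x = y)
    (x : X) (K : Set X) (hKW : K ⊆ Ws f δ x)
    (ε : ℝ) (hε : 0 < ε) :
    ∃ N : ℕ, ∀ n ≥ N, ∀ y ∈ K, dist ((f ^ n) x) ((f ^ n) y) ≤ ε := by
  by_contra h
  push_neg at h
  choose n hn y hy hd using h
  set u : ℕ → X × X := fun N => ((f ^ n N) x, (f ^ n N) (y N)) with hu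
  obtain ⟨pq, -, φ, hφ, hconv⟩ :=
    isCompact_univ.tendsto_subseq (x := u) (fun N => mem_univ _)
  have h1 : Tendsto (fun i => (u (φ i)).1) atTop (𝓝 pq.1) :=
    (continuous_fst.tendsto pq).comp hconv
  have h2 : Tendsto (fun i => (u (φ i)).2) atTop (𝓝 pq.2) :=
    (continuous_snd.tendsto pq).comp hconv
  have hεle : ε ≤ dist pq.1 pq.2 := by
    refine le_of_tendsto_of_tendsto' tendsto_const_nhds (h1.dist h2) ?_
    intro i; exact (hd (φ i)).le
  have hδle : ∀ m : ℤ, dist ((f ^ m) pq.1) ((f ^ m) pq.2) ≤ δ := by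
    intro m
    have hc := contPermZpow f hf hf' m
    have t1 : Tendsto (fun i => (f ^ m) (u (φ i)).1) atTop (𝓝 ((f ^ m) pq.1)) :=
      (hc.tendsto pq.1).comp h1
    have t2 : Tendsto (fun i => (f ^ m) (u (φ i)).2) atTop (𝓝 ((f ^ m) pq.2)) :=
      (hc.tendsto pq.2).comp h2
    refine le_of_tendsto (t1.dist t2) ?_
    filter_upwards [eventually_ge_atTop (-m).toNat] with i hi
    have hge : 0 ≤ m + (n (φ i) : ℤ) := by
      have : ((-m).toNat : ℤ) ≤ (n (φ i) : ℤ) := by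
        exact_mod_cast le_trans hi (le_trans (hφ.id_le i) (hn (φ i)))
      omega
    show dist ((f ^ m) ((f ^ n (φ i)) x)) ((f ^ m) ((f ^ n (φ i)) (y (φ i)))) ≤ δ
    rw [apply_zpow_pow f m (n (φ i)) hge x, apply_zpow_pow f m (n (φ i)) hge (y (φ i))]
    exact hKW (hy (φ i)) _
  have := hexp pq.1 pq.2 hδle
  rw [this] at hεle
  simp at hεle
  linarith

/-- Nested-image construction: for a recurrent point x whose η-ball lies in its
δ-stable set, there are a sequence n_k → ∞ and a point z such that for every k
the intersection over j ≥ 1 of f^{j·n_k}(closure B_η(x)) is exactly {z}, and z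
is periodic. -/
theorem nested_images_periodic_point {X : Type*} [MetricSpace X] [CompactSpace X]
    (f : Equiv.Perm X) (hf : Continuous f) (hf' : Continuous f.symm)
    (δ : ℝ) (hδ : 0 < δ)
    (hexp : ∀ x y : X, (∀ n : ℤ, dist ((f ^ n) x) ((f ^ n) y) ≤ δ) → x = y)
    (x : X) (hrec : x ∈ omegaSet f x)
    (η : ℝ) (hη : 0 < η) (hball : Metric.ball x η ⊆ Ws f δ x) :
    ∃ n : ℕ → ℕ, StrictMono n ∧ ∃ z : X,
      (∀ k : ℕ, (⋂ j ∈ {j : ℕ | 1 ≤ j},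
          (f ^ (j * n k)) '' closure (Metric.ball x η)) = {z}) ∧
      ∃ m : ℕ, 1 ≤ m ∧ (f ^ m) z = z := by
  set K : Set X := closure (Metric.ball x η) with hK
  have hKcl : IsClosed K := isClosed_closure
  have hKc : IsCompact K := hKcl.isCompact
  have hKne : K.Nonempty := ⟨x, subset_closure (mem_ball_self hη)⟩
  -- the closure of the ball is still inside the stable set
  have hWcl : IsClosed (Ws f δ x) := by
    have hWs : Ws f δ x = ⋂ n : ℕ, {y | dist ((f ^ n) x) ((f ^ n) y) ≤ δ} := by
      ext y; simp [Ws, mem_iInter]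
    rw [hWs]
    exact isClosed_iInter fun n =>
      isClosed_le (Continuous.dist continuous_const (contPermPow f hf n)) continuous_const
  have hKW : K ⊆ Ws f δ x := closure_minimal hball hWcl
  have U : ∀ ε : ℝ, 0 < ε → ∃ N : ℕ, ∀ n ≥ N, ∀ y ∈ K,
      dist ((f ^ n) x) ((f ^ n) y) ≤ ε :=
    fun ε hε => uniform_shrink f hf hf' δ hexp x K hKW ε hε
  -- choose n₀
  obtain ⟨s, hs, hst⟩ := hrec
  obtain ⟨N, hN⟩ := U (η/3) (by linarith)
  have hev : ∀ᶠ k in atTop, dist ((f ^ s k) x) x < η/3 :=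
    (Metric.tendsto_nhds.mp hst (η/3) (by linarith))
  obtain ⟨K₀, hK₀⟩ := hev.exists_forall_of_atTop
  set k₀ : ℕ := max K₀ (max N 1) with hk₀
  set n₀ : ℕ := s k₀ with hn₀
  have hn₀N : N ≤ n₀ := le_trans (le_trans (le_max_left _ _) (le_max_right K₀ _)) hs.le_apply
  have hn₀1 : 1 ≤ n₀ := le_trans (le_trans (le_max_right _ _) (le_max_right K₀ _)) hs.le_apply
  have hclose : dist ((f ^ n₀) x) x < η/3 := hK₀ k₀ (le_max_left _ _)
  -- the shrink step
  have hshrink : ∀ y ∈ K, (f ^ n₀) y ∈ K := by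
    intro y hy
    apply subset_closure
    rw [mem_ball]
    calc dist ((f ^ n₀) y) x ≤ dist ((f ^ n₀) y) ((f ^ n₀) x) + dist ((f ^ n₀) x) x :=
          dist_triangle _ _ _
      _ ≤ η/3 + dist ((f ^ n₀) x) x := by
          have := hN n₀ hn₀N y hy; rw [dist_comm]; linarith
      _ < η := by linarith
  -- nested sets
  set C : ℕ → Set X := fun i => (f ^ (i * n₀)) '' K with hC
  have hstep : ∀ i, C (i + 1) ⊆ C i := by
    intro i
    have : (i + 1) * n₀ = i * n₀ + n₀ := by ring
    rw [hC]
    simp only [this]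
    rw [perm_pow_image_add]
    exact image_mono (fun y hy => by
      obtain ⟨a, ha, rfl⟩ := hy
      exact hshrink a ha)
  have hanti : Antitone C := antitone_nat_of_succ_le hstep
  have hCc : ∀ i, IsCompact (C i) := fun i => hKc.image (contPermPow f hf _)
  have hCcl : ∀ i, IsClosed (C i) := fun i => (hCc i).isClosed
  have hCne : ∀ i, (C i).Nonempty := fun i => hKne.image _
  set D : ℕ → Set X := fun i => C (i + 1) with hD
  obtain ⟨z, hz⟩ := IsCompact.nonempty_iInter_of_sequence_nonempty_isCompact_isClosed D
    (fun i => hstep (i + 1)) (fun i => hCne _) (hCc 1) (fun i => hCcl _)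
  -- uniqueness
  have huniq : ∀ w w' : X, (∀ i, w ∈ D i) → (∀ i, w' ∈ D i) → w = w' := by
    intro w w' hw hw'
    apply eq_of_forall_dist_le
    intro ε hε
    obtain ⟨N', hN'⟩ := U (ε/2) (by linarith)
    have hge : N' ≤ (N' + 1) * n₀ := by nlinarith
    obtain ⟨a, ha, haw⟩ := hw N'
    obtain ⟨b, hb, hbw⟩ := hw' N'
    have h1 := hN' ((N' + 1) * n₀) hge a ha
    have h2 := hN' ((N' + 1) * n₀) hge b hb
    rw [haw] at h1; rw [hbw] at h2
    calc dist w w' ≤ dist w ((f ^ ((N' + 1) * n₀)) x) + dist ((f ^ ((N' + 1) * n₀)) x) w' :=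
          dist_triangle _ _ _
      _ ≤ ε := by rw [dist_comm] at h1; linarith
  have hzC : ∀ i, 1 ≤ i → z ∈ C i := by
    intro i hi
    have := mem_iInter.mp hz (i - 1)
    have hi' : i - 1 + 1 = i := by omega
    rw [hD] at this
    simp only at this
    rwa [hi'] at this
  refine ⟨fun k => (k + 1) * n₀, ?_, z, ?_, n₀, hn₀1, ?_⟩
  · intro a b hab
    exact Nat.mul_lt_mul_of_lt_of_le (by omega) le_rfl (by omega)
  · intro k
    ext w
    simp only [mem_iInter, mem_singleton_iff, mem_setOf_eq]
    constructor
    · intro hw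
      refine huniq w z ?_ (fun i => mem_iInter.mp hz i)
      intro i
      have h1 : w ∈ C ((i + 1) * (k + 1)) := by
        have := hw (i + 1) (by omega)
        rwa [← mul_assoc] at this
      exact hanti (by nlinarith) h1
    · rintro rfl j hj
      have := hzC (j * (k + 1)) (Nat.one_le_iff_ne_zero.mpr (Nat.mul_ne_zero (by omega) (by omega)))
      simp only [hC] at this
      rwa [mul_assoc] at this
  · refine (huniq ((f ^ n₀) z) z ?_ (fun i => mem_iInter.mp hz i))
    intro i
    obtain ⟨a, ha, haz⟩ := mem_iInter.mp hz i
    refine ⟨(f ^ n₀) a, hshrink a ha, ?_⟩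
    rw [perm_pow_apply_add, add_comm, ← perm_pow_apply_add, haz]
end
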